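/- Let S be a semigroup with a, b ∈ S. If a ∼ₚ b (i.e., a = gh and b = hg for some g, h ∈ S¹), then a ∼𝓌 b. Consequently ∼ₚ* ⊆ ∼𝓌 (the transitive closure of primary conjugacy is contained in ∼𝓌). -/
import Mathlib


/-- Primary conjugacy. -/
def PrimConj {S : Type*} [Semigroup S] (a b : S) : Prop :=
  ∃ g h : WithOne S, (a : WithOne S) = g * h ∧ (b : WithOne S) = h * g

/-- The relation ∼𝓌. -/
def WConj {S : Type*} [Semigroup S] (a b : S) : Prop :=
  ∃ (g h : WithOne S) (m : ℕ), 0 < m ∧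
    (a : WithOne S) * g = g * (b : WithOne S) ∧
    (b : WithOne S) * h = h * (a : WithOne S) ∧
    g * h = (a : WithOne S) ^ m ∧
    h * g = (b : WithOne S) ^ m

private lemma semiconj_pow {M : Type*} [Monoid M] {a g b : M} (h : a * g = g * b) (n : ℕ) :
    a ^ n * g = g * b ^ n := by
  induction n with
  | zero => simp
  | succ n ih =>
    calc a ^ (n+1) * g = a ^ n * (a * g) := by rw [pow_succ]; group
    _ = (a ^ n * g) * b := by rw [h, mul_assoc]
    _ = g * b ^ (n+1) := by rw [ih, pow_succ, mul_assoc]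

private lemma wConj_trans {S : Type*} [Semigroup S] {a b c : S}
    (hab : WConj a b) (hbc : WConj b c) : WConj a c := by
  obtain ⟨g, h, m, hm, h1, h2, h3, h4⟩ := hab
  obtain ⟨g', h', n, hn, h1', h2', h3', h4'⟩ := hbc
  refine ⟨g * g', h' * h, m + n, by omega, ?_, ?_, ?_, ?_⟩
  · calc (a : WithOne S) * (g * g') = (g * (b : WithOne S)) * g' := by rw [← mul_assoc, h1]
    _ = g * g' * c := by rw [mul_assoc, h1', mul_assoc]
  · calc (c : WithOne S) * (h' * h) = (h' * (b : WithOne S)) * h := by rw [← mul_assoc, h2']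
    _ = h' * h * a := by rw [mul_assoc, h2, mul_assoc]
  · have hp : (a : WithOne S) ^ n * g = g * (b : WithOne S) ^ n := semiconj_pow h1 n
    calc g * g' * (h' * h) = g * ((b : WithOne S) ^ n) * h := by
          rw [mul_assoc, ← mul_assoc g', h3', mul_assoc]
    _ = (a : WithOne S) ^ n * (g * h) := by rw [← hp, mul_assoc]
    _ = (a : WithOne S) ^ (m + n) := by rw [h3, ← pow_add, Nat.add_comm]
  · have hp : (c : WithOne S) ^ m * h' = h' * (b : WithOne S) ^ m := semiconj_pow h2' m
    calc h' * h * (g * g') = h' * ((b : WithOne S) ^ m) * g' := by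
          rw [mul_assoc, ← mul_assoc h, h4, mul_assoc]
    _ = (c : WithOne S) ^ m * (h' * g') := by rw [← hp, mul_assoc]
    _ = (c : WithOne S) ^ (m + n) := by rw [h4', ← pow_add]

/-- ∼ₚ ⊆ ∼𝓌, and consequently ∼ₚ* ⊆ ∼𝓌 (the transitive closure of
primary conjugacy is contained in ∼𝓌). -/
theorem primConj_subset_wConj (S : Type*) [Semigroup S] :
    (∀ a b : S, PrimConj a b → WConj a b) ∧
    (∀ a b : S, Relation.TransGen (fun x y : S => PrimConj x y) a b → WConj a b) := by
  have base : ∀ a b : S, PrimConj a b → WConj a b := by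
    rintro a b ⟨g, h, ha, hb⟩
    exact ⟨g, h, 1, one_pos, by rw [ha, hb]; group, by rw [ha, hb]; group,
      by rw [ha, pow_one], by rw [hb, pow_one]⟩
  refine ⟨base, fun a b hab => ?_⟩
  induction hab with
  | single h => exact base _ _ h
  | tail _ h ih => exact wConj_trans ih (base _ _ h)
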